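/- Assume G : ℕ → ℕ is strictly increasing with G 1 = 1, and there is an integer s ≥ 2 such that G (i+1) ≤ s · G i for all i ≥ 1. Then there exists a real constant γ > 0, depending only on s, such that for every n ≥ 2 (with m = G n) and every natural number t with t ≥ γ·n², the t-step distribution p of the random walk on ℤ_m determined by G 1, …, G n satisfies (1/2)·Σ_{x ∈ ZMod m} |p t x − π x| ≤ 1/4, where π is the uniform distribution. That is, the mixing time is at most γ·n². -/

import Mathlib

open Finset Real

/-- Step distribution of the random walk on `ℤ_m` with steps drawn uniformly from
`{G 1, …, G n}`. -/
noncomputable def stepDist (G : ℕ → ℕ) (n m : ℕ) [NeZero m] (x : ZMod m) : ℝ :=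
  (1 / n : ℝ) * ((Finset.Icc 1 n).filter (fun i => (G i : ZMod m) = x)).card

/-- `t`-step distribution of the random walk started at `0`. -/
noncomputable def walkDist (G : ℕ → ℕ) (n m : ℕ) [NeZero m] : ℕ → ZMod m → ℝ
  | 0 => fun x => if x = 0 then 1 else 0
  | t + 1 => fun x => ∑ y : ZMod m, walkDist G n m t y * stepDist G n m (x - y)

/-!
Fourier analysis on `ZMod m`. The transform of the `t`-step distribution is `μ̂ ^ t`, so Fourier
inversion gives `‖p t - π‖₁ ≤ ∑_{k ≠ 0} ‖μ̂ k‖ ^ t`. For `k ≠ 0` write `k = ±k'` with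
`1 ≤ k' ≤ m / 2` and put `z j = G j * k' / m`: then `z 1 ≤ 1 / 2`, `z n = k'` is an integer and
`z (j + 1) ≤ s * z j`. If `T` is the last index with `z T ≤ 1 / 2`, then `s ^ (n - T) ≥ 2 k'`.
Some `i₀ ≤ T` has `z i₀` at distance `≥ 1 / (2 s)` from `ℤ` (otherwise `z` would stay below
`1 / 2` up to `n`), and pairing each `j ∈ (T, n]` with `n` or with `i₀` gives `n - T` pairs
`(i, j)` with `z i - z j` at distance `≥ 1 / (4 s)` from `ℤ`. Each such pair lowers `‖μ̂ k‖²` by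
at least `1 / (2 s² n²)`, so for `t ≥ γ n²` we get `‖μ̂ k‖ ^ t ≤ (2 s²) ^ (-(n - T)) ≤ 1 / (8 k'²)`,
and `∑ 1 / k'² ≤ 4`.
-/

open scoped ZMod

namespace ZMod
variable {N : ℕ} [NeZero N]

lemma dft_const (c : ℂ) (k : ZMod N) :
    𝓕 (fun _ ↦ c) k = if k = 0 then N * c else 0 := by
  simp_rw [dft_apply, smul_eq_mul, ← Finset.sum_mul, ← mul_neg,
    AddChar.sum_mulShift _ (isPrimitive_stdAddChar N), neg_eq_zero, card]
  split_ifs <;> simp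

lemma dft_indicator_zero (k : ZMod N) : 𝓕 (fun j ↦ if j = 0 then (1 : ℂ) else 0) k = 1 := by
  simp [dft_apply]

lemma dft_conv (Φ Ψ : ZMod N → ℂ) (k : ZMod N) :
    𝓕 (fun x ↦ ∑ y, Φ y * Ψ (x - y)) k = 𝓕 Φ k * 𝓕 Ψ k := by
  rw [dft_apply, dft_apply, dft_apply, Finset.sum_mul_sum]
  simp only [smul_eq_mul, Finset.mul_sum]
  rw [Finset.sum_comm]
  refine Finset.sum_congr rfl fun y _ ↦ ?_
  refine Fintype.sum_equiv (Equiv.subRight y) _ _ fun x ↦ ?_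
  have : stdAddChar (-(x * k)) = stdAddChar (-(y * k)) * stdAddChar (-((x - y) * k)) := by
    rw [← AddChar.map_add_eq_mul]; ring_nf
  rw [Equiv.subRight_apply, this]
  ring

lemma sum_norm_le_sum_norm_dft (Φ : ZMod N → ℂ) : ∑ j, ‖Φ j‖ ≤ ∑ k, ‖𝓕 Φ k‖ := by
  have hΦ : ∀ j, ‖Φ j‖ ≤ (N : ℝ)⁻¹ * ∑ k, ‖𝓕 Φ k‖ := fun j ↦ by
    rw [← LinearEquiv.symm_apply_apply dft Φ, invDFT_apply, norm_smul, norm_inv,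
      Complex.norm_natCast, LinearEquiv.symm_apply_apply]
    gcongr
    refine (norm_sum_le _ _).trans (le_of_eq (Finset.sum_congr rfl fun k _ ↦ ?_))
    rw [norm_smul, stdAddChar_apply, Circle.norm_coe, one_mul]
  calc ∑ j, ‖Φ j‖ ≤ ∑ _j : ZMod N, (N : ℝ)⁻¹ * ∑ k, ‖𝓕 Φ k‖ := Finset.sum_le_sum fun j _ ↦ hΦ j
    _ = ∑ k, ‖𝓕 Φ k‖ := by
      rw [Finset.sum_const, card_univ, ZMod.card, nsmul_eq_mul, ← mul_assoc,
        mul_inv_cancel₀ (NeZero.ne _ |> Nat.cast_ne_zero.2), one_mul]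

variable (N) in
lemma sum_inv_sq_natAbs_valMinAbs_le :
    ∑ k ∈ univ.erase (0 : ZMod N), ((k.valMinAbs.natAbs : ℝ) ^ 2)⁻¹ ≤ 4 := by
  have hval : ∑ k ∈ univ.erase (0 : ZMod N), ((k.val : ℝ) ^ 2)⁻¹ ≤ 2 := by
    calc ∑ k ∈ univ.erase (0 : ZMod N), ((k.val : ℝ) ^ 2)⁻¹
        = ∑ v ∈ (univ.erase (0 : ZMod N)).image val, ((v : ℝ) ^ 2)⁻¹ :=
          (sum_image (f := fun v : ℕ ↦ ((v : ℝ) ^ 2)⁻¹)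
            fun a _ b _ h ↦ val_injective N h).symm
      _ ≤ ∑ v ∈ Ioo 0 N, ((v : ℝ) ^ 2)⁻¹ := by
          refine sum_le_sum_of_subset_of_nonneg (fun v hv ↦ ?_) fun _ _ _ ↦ by positivity
          obtain ⟨k, hk, rfl⟩ := mem_image.1 hv
          exact mem_Ioo.2 ⟨val_pos.2 (ne_of_mem_erase hk), val_lt k⟩
      _ ≤ 2 := by simpa using sum_Ioo_inv_sq_le (α := ℝ) 0 N
  have hneg : ∑ k ∈ univ.erase (0 : ZMod N), (((-k).val : ℝ) ^ 2)⁻¹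
      = ∑ k ∈ univ.erase (0 : ZMod N), ((k.val : ℝ) ^ 2)⁻¹ :=
    sum_equiv (Equiv.neg _) (by simp) fun _ _ ↦ rfl
  have hmin : ∀ k ∈ univ.erase (0 : ZMod N), ((k.valMinAbs.natAbs : ℝ) ^ 2)⁻¹
      ≤ ((k.val : ℝ) ^ 2)⁻¹ + (((-k).val : ℝ) ^ 2)⁻¹ := fun k hk ↦ by
    rw [valMinAbs_natAbs_eq_min, neg_val, if_neg (ne_of_mem_erase hk)]
    rcases min_choice k.val (N - k.val) with h | h <;> rw [h]
    · exact le_add_of_nonneg_right (by positivity)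
    · exact le_add_of_nonneg_left (by positivity)
  calc _ ≤ _ := sum_le_sum hmin
    _ ≤ 4 := by rw [sum_add_distrib, hneg]; linarith

lemma norm_toAddCircle_intCast_mul (a : ℤ) (k : ZMod N) :
    ‖toAddCircle ((a : ZMod N) * k)‖ = ‖((a * k.valMinAbs.natAbs / N : ℝ) : UnitAddCircle)‖ := by
  have hcoe : toAddCircle ((a : ZMod N) * (k.valMinAbs.natAbs : ZMod N))
      = ((a * k.valMinAbs.natAbs / N : ℝ) : UnitAddCircle) := by
    rw [← Int.cast_natCast, ← Int.cast_mul, toAddCircle_intCast, Int.cast_mul, Int.cast_natCast]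
  rw [← hcoe, natCast_natAbs_valMinAbs]
  split_ifs
  · rfl
  · rw [mul_neg, map_neg, norm_neg]

end ZMod

lemma UnitAddCircle.re_toCircle_le_one_sub_norm_sq (x : UnitAddCircle) :
    (AddCircle.toCircle x : ℂ).re ≤ 1 - 8 * ‖x‖ ^ 2 := by
  induction x using QuotientAddGroup.induction_on with | H y => ?_
  set r := y - round y
  have hr : |r| ≤ 1 / 2 := abs_sub_round y
  have hcos : cos (2 * π * y) = cos (2 * π * r) := by
    rw [show 2 * π * y = 2 * π * r + (round y : ℤ) * (2 * π) by ring, cos_add_int_mul_two_pi]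
  have hbound : cos (2 * π * r) ≤ 1 - 2 / π ^ 2 * (2 * π * r) ^ 2 :=
    cos_le_one_sub_mul_cos_sq (by rw [abs_mul, abs_of_pos two_pi_pos]; nlinarith [pi_pos])
  rw [AddCircle.toCircle_apply_mk, Circle.coe_exp, Complex.exp_ofReal_mul_I_re, div_one, hcos,
    UnitAddCircle.norm_eq, sq_abs]
  convert hbound using 2
  simp only [r]
  field_simp
  ring

lemma UnitAddCircle.norm_sum_toCircle_sq_le {ι : Type*} (I : Finset ι) (θ : ι → UnitAddCircle) :
    ‖∑ i ∈ I, (AddCircle.toCircle (θ i) : ℂ)‖ ^ 2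
      ≤ #I ^ 2 - 8 * ∑ p ∈ I ×ˢ I, ‖θ p.1 - θ p.2‖ ^ 2 := by
  have hexpand : ‖∑ i ∈ I, (AddCircle.toCircle (θ i) : ℂ)‖ ^ 2
      = ∑ p ∈ I ×ˢ I, (AddCircle.toCircle (θ p.1 - θ p.2) : ℂ).re := by
    rw [← Complex.normSq_eq_norm_sq, ← Complex.ofReal_re (Complex.normSq _), ← Complex.mul_conj,
      map_sum, Finset.sum_mul_sum, Complex.re_sum, Finset.sum_product]
    refine Finset.sum_congr rfl fun i _ ↦ ?_
    rw [Complex.re_sum]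
    refine Finset.sum_congr rfl fun j _ ↦ ?_
    rw [sub_eq_add_neg, AddCircle.toCircle_add, AddCircle.toCircle_neg, Circle.coe_mul,
      Circle.coe_inv_eq_conj]
  calc ‖∑ i ∈ I, (AddCircle.toCircle (θ i) : ℂ)‖ ^ 2
      ≤ ∑ p ∈ I ×ˢ I, (1 - 8 * ‖θ p.1 - θ p.2‖ ^ 2) := by
        rw [hexpand]; exact Finset.sum_le_sum fun p _ ↦ re_toCircle_le_one_sub_norm_sq _
    _ = #I ^ 2 - 8 * ∑ p ∈ I ×ˢ I, ‖θ p.1 - θ p.2‖ ^ 2 := by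
        rw [Finset.sum_sub_distrib, ← Finset.mul_sum, Finset.sum_const, card_product]
        ring

section FarPairs
variable {s : ℝ} {z : ℕ → ℝ} {n : ℕ}

lemma le_pow_mul_of_le_mul_succ (hs : 0 ≤ s) (hstep : ∀ j, 1 ≤ j → z (j + 1) ≤ s * z j)
    {a : ℕ} (ha : 1 ≤ a) (d : ℕ) : z (a + d) ≤ s ^ d * z a := by
  induction d with
  | zero => simp
  | succ d ih =>
    calc z (a + d + 1) ≤ s * z (a + d) := hstep _ (by omega)
      _ ≤ s * (s ^ d * z a) := by gcongr
      _ = s ^ (d + 1) * z a := by ring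

lemma exists_le_half_le_norm_coe (hs : 0 < s) (hz0 : ∀ j, 0 ≤ z j) (hz1 : z 1 ≤ 1 / 2)
    (hstep : ∀ j, 1 ≤ j → z (j + 1) ≤ s * z j) (hn : 1 ≤ n) (hzn : 1 / 2 < z n) :
    ∃ i ∈ Icc 1 n, z i ≤ 1 / 2 ∧ (2 * s)⁻¹ ≤ ‖(z i : UnitAddCircle)‖ := by
  by_contra! hnear
  have hnorm : ∀ j, z j ≤ 1 / 2 → ‖(z j : UnitAddCircle)‖ = z j := fun j hj ↦ by
    rw [(AddCircle.norm_coe_eq_abs_iff (p := (1 : ℝ)) one_ne_zero).2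
      (by rwa [abs_of_nonneg (hz0 j), abs_one]), abs_of_nonneg (hz0 j)]
  have hsmall : ∀ j, 1 ≤ j → j ≤ n → z j ≤ 1 / 2 := by
    intro j hj
    induction j, hj using Nat.le_induction with
    | base => exact fun _ ↦ hz1
    | succ j hj ih =>
      intro hjn
      have hzj := ih (by omega)
      have : z j < (2 * s)⁻¹ := hnorm j hzj ▸ hnear j (mem_Icc.2 ⟨hj, by omega⟩) hzj
      calc z (j + 1) ≤ s * z j := hstep j hj
        _ ≤ s * (2 * s)⁻¹ := by gcongr
        _ = 1 / 2 := by field_simp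
  linarith [hsmall n hn le_rfl]

lemma exists_far_pairs (hs : 0 < s) (hz0 : ∀ j, 0 ≤ z j) (hz1 : z 1 ≤ 1 / 2)
    (hstep : ∀ j, 1 ≤ j → z (j + 1) ≤ s * z j) (hn : 1 ≤ n) {k : ℕ} (hk : 1 ≤ k)
    (hzn : z n = k) :
    ∃ S ⊆ Icc 1 n ×ˢ Icc 1 n,
      (∀ p ∈ S, (4 * s)⁻¹ ≤ ‖(z p.1 : UnitAddCircle) - z p.2‖) ∧ 2 * k ≤ s ^ #S := by
  classical
  have hzn_half : 1 / 2 < z n := by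
    rw [hzn]; linarith [(Nat.one_le_cast (α := ℝ)).2 hk]
  set T := Nat.findGreatest (fun j ↦ z j ≤ 1 / 2) n
  have hT1 : 1 ≤ T := Nat.le_findGreatest hn hz1
  have hzT : z T ≤ 1 / 2 := Nat.findGreatest_spec (P := fun j ↦ z j ≤ 1 / 2) hn hz1
  have hTn : T < n := by
    by_contra! h
    have hTeq : T = n := le_antisymm (Nat.findGreatest_le n) h
    rw [hTeq] at hzT
    linarith
  have hgt : ∀ j, T < j → j ≤ n → 1 / 2 < z j := fun j hTj hjn ↦
    lt_of_not_ge (Nat.findGreatest_is_greatest hTj hjn)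
  have hgrowth : 2 * k ≤ s ^ (n - T) := by
    have := le_pow_mul_of_le_mul_succ hs.le hstep hT1 (n - T)
    rw [Nat.add_sub_cancel' hTn.le, hzn] at this
    nlinarith [pow_pos hs (n - T)]
  obtain ⟨i₀, hi₀, hzi₀, hfar⟩ := exists_le_half_le_norm_coe hs hz0 hz1 hstep hn hzn_half
  have hi₀T : i₀ ≤ T := by
    by_contra! h; linarith [hgt i₀ h (mem_Icc.1 hi₀).2]
  have hxn : (z n : UnitAddCircle) = 0 := by
    rw [hzn, AddCircle.coe_eq_zero_iff]; exact ⟨k, by simp⟩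
  let f : ℕ → ℕ × ℕ := fun j ↦ if (4 * s)⁻¹ ≤ ‖(z j : UnitAddCircle)‖ then (j, n) else (i₀, j)
  have hf_inj : Set.InjOn f (Ioc T n) := by
    -- a collision `(a, n) = (i₀, b)` would force `a = i₀ ≤ T < a`
    intro a ha b hb hab
    have := mem_Ioc.1 ha; have := mem_Ioc.1 hb
    simp only [f] at hab
    split_ifs at hab <;> simp only [Prod.mk.injEq] at hab <;> omega
  refine ⟨(Ioc T n).image f, ?_, ?_, ?_⟩
  · intro p hp
    obtain ⟨j, hj, rfl⟩ := mem_image.1 hp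
    have := mem_Ioc.1 hj; have := mem_Icc.1 hi₀
    simp only [f]
    split_ifs <;> simp only [mem_product, mem_Icc] <;> omega
  · intro p hp
    obtain ⟨j, -, rfl⟩ := mem_image.1 hp
    simp only [f]
    split_ifs with hj
    · simpa [hxn] using hj
    · have h4s : (4 * s)⁻¹ = (2 * s)⁻¹ - (4 * s)⁻¹ := by field_simp; norm_num
      linarith [norm_sub_norm_le (z i₀ : UnitAddCircle) (z j)]
  · rw [card_image_of_injOn hf_inj, Nat.card_Ioc]; exact hgrowth
end FarPairs

section Walk
open ZMod
variable {G : ℕ → ℕ} {n m : ℕ} [NeZero m]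

lemma dft_stepDist (k : ZMod m) :
    𝓕 (fun x ↦ (stepDist G n m x : ℂ)) k
      = (n : ℂ)⁻¹ * ∑ i ∈ Icc 1 n, (AddCircle.toCircle (toAddCircle (-(G i * k) : ZMod m)) : ℂ) := by
  rw [dft_apply, ← sum_fiberwise (Icc 1 n) (fun i ↦ (G i : ZMod m)), mul_sum]
  refine sum_congr rfl fun x _ ↦ ?_
  have hchar : (stdAddChar (-(x * k)) : ℂ) = AddCircle.toCircle (toAddCircle (-(x * k))) := rfl
  rw [sum_congr rfl fun i hi ↦ by rw [(mem_filter.1 hi).2], sum_const, stepDist, hchar, nsmul_eq_mul,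
    smul_eq_mul]
  push_cast
  ring

lemma dft_stepDist_zero (hn : n ≠ 0) : 𝓕 (fun x ↦ (stepDist G n m x : ℂ)) 0 = 1 := by
  simp [dft_stepDist, hn]

lemma dft_walkDist (t : ℕ) (k : ZMod m) :
    𝓕 (fun x ↦ (walkDist G n m t x : ℂ)) k = 𝓕 (fun x ↦ (stepDist G n m x : ℂ)) k ^ t := by
  induction t with
  | zero => simpa [walkDist, apply_ite] using dft_indicator_zero k
  | succ t ih =>
    simp only [walkDist, Complex.ofReal_sum, Complex.ofReal_mul]
    rw [dft_conv (fun y ↦ (walkDist G n m t y : ℂ)) (fun y ↦ (stepDist G n m y : ℂ)), ih, pow_succ]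

lemma sum_abs_walkDist_sub_le (hn : n ≠ 0) (t : ℕ) :
    ∑ x : ZMod m, |walkDist G n m t x - 1 / m|
      ≤ ∑ k ∈ univ.erase 0, ‖𝓕 (fun x ↦ (stepDist G n m x : ℂ)) k‖ ^ t := by
  have h := sum_norm_le_sum_norm_dft fun x ↦ ((walkDist G n m t x - 1 / m : ℝ) : ℂ)
  have hdft : ∀ k, 𝓕 (fun x ↦ ((walkDist G n m t x - 1 / m : ℝ) : ℂ)) k
      = 𝓕 (fun x ↦ (stepDist G n m x : ℂ)) k ^ t - if k = 0 then 1 else 0 := fun k ↦ by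
    have : (fun x ↦ ((walkDist G n m t x - 1 / m : ℝ) : ℂ))
        = (fun x ↦ (walkDist G n m t x : ℂ)) - fun _ ↦ ((1 / m : ℝ) : ℂ) := by
      ext x; push_cast; rfl
    rw [this, map_sub, Pi.sub_apply, dft_walkDist, dft_const]
    split_ifs with hk
    · rw [hk, dft_stepDist_zero hn, ← Complex.ofReal_natCast, ← Complex.ofReal_mul,
        mul_one_div_cancel (Nat.cast_ne_zero.2 (NeZero.ne m)), Complex.ofReal_one]
    · rfl
  calc ∑ x : ZMod m, |walkDist G n m t x - 1 / m|
      = ∑ x : ZMod m, ‖((walkDist G n m t x - 1 / m : ℝ) : ℂ)‖ := by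
        simp only [Complex.norm_real, Real.norm_eq_abs]
    _ ≤ _ := h
    _ = _ := by
      rw [← add_sum_erase _ _ (mem_univ 0), hdft, if_pos rfl, dft_stepDist_zero hn, one_pow,
        sub_self, norm_zero, zero_add]
      refine sum_congr rfl fun k hk ↦ ?_
      rw [hdft, if_neg (ne_of_mem_erase hk), sub_zero, norm_pow]

lemma exists_norm_dft_stepDist_sq_le (hG1 : G 1 = 1) {s : ℕ} (hs0 : 0 < s)
    (hs : ∀ i, 1 ≤ i → G (i + 1) ≤ s * G i) (hn : 1 ≤ n) (hm : m = G n) {k : ZMod m}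
    (hk : k ≠ 0) :
    ∃ N : ℕ, 2 * (k.valMinAbs.natAbs : ℝ) ≤ (s : ℝ) ^ N ∧
      ‖𝓕 (fun x ↦ (stepDist G n m x : ℂ)) k‖ ^ 2 ≤ 1 - N / (2 * s ^ 2 * n ^ 2) := by
  set k' := k.valMinAbs.natAbs
  have hk'1 : 1 ≤ k' := Nat.one_le_iff_ne_zero.2 (by simpa [k'] using hk)
  have hk'2 : 2 * (k' : ℝ) ≤ m := by
    have := ZMod.natAbs_valMinAbs_le k; exact_mod_cast (by omega : 2 * k' ≤ m)
  have hmR : (0 : ℝ) < m := by exact_mod_cast NeZero.pos m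
  set z : ℕ → ℝ := fun j ↦ G j * k' / m
  have hz1 : z 1 ≤ 1 / 2 := by
    simp only [z, hG1, Nat.cast_one, one_mul]; rw [div_le_iff₀ hmR]; linarith
  have hstep : ∀ j, 1 ≤ j → z (j + 1) ≤ s * z j := fun j hj ↦ by
    simp only [z, ← mul_div_assoc, ← mul_assoc]
    gcongr
    exact_mod_cast hs j hj
  have hzn : z n = k' := by simp only [z, ← hm]; field_simp
  obtain ⟨S, hSsub, hfar, hcard⟩ :=
    exists_far_pairs (s := (s : ℝ)) (by positivity) (fun j ↦ by positivity) hz1 hstep hn hk'1 hzn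
  refine ⟨#S, by exact_mod_cast hcard, ?_⟩
  set θ : ℕ → UnitAddCircle := fun i ↦ toAddCircle (-(G i * k) : ZMod m)
  have hθ : ∀ i j, ‖θ i - θ j‖ = ‖(z i : UnitAddCircle) - z j‖ := fun i j ↦ by
    rw [← map_sub, show -((G i : ZMod m) * k) - -(G j * k) = -(((G i - G j : ℤ) : ZMod m) * k) by
      push_cast; ring, map_neg, norm_neg, norm_toAddCircle_intCast_mul, ← AddCircle.coe_sub]
    congr 2
    simp only [z]; push_cast; ring
  have hpairs : #S * ((4 * s : ℝ)⁻¹) ^ 2 ≤ ∑ p ∈ Icc 1 n ×ˢ Icc 1 n, ‖θ p.1 - θ p.2‖ ^ 2 := by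
    calc #S * ((4 * s : ℝ)⁻¹) ^ 2 = ∑ p ∈ S, ((4 * s : ℝ)⁻¹) ^ 2 := by
          rw [sum_const, nsmul_eq_mul]
      _ ≤ ∑ p ∈ S, ‖θ p.1 - θ p.2‖ ^ 2 := sum_le_sum fun p hp ↦ by
          rw [hθ]; gcongr; exact hfar p hp
      _ ≤ _ := sum_le_sum_of_subset_of_nonneg hSsub fun _ _ _ ↦ by positivity
  have hsum := UnitAddCircle.norm_sum_toCircle_sq_le (Icc 1 n) θ
  rw [Nat.card_Icc, Nat.add_sub_cancel] at hsum
  have hnR : (0 : ℝ) < n := by exact_mod_cast hn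
  rw [dft_stepDist, norm_mul, mul_pow, norm_inv, Complex.norm_natCast]
  calc (n : ℝ)⁻¹ ^ 2 * ‖∑ i ∈ Icc 1 n, (AddCircle.toCircle (θ i) : ℂ)‖ ^ 2
      ≤ (n : ℝ)⁻¹ ^ 2 * (n ^ 2 - 8 * (#S * ((4 * s : ℝ)⁻¹) ^ 2)) := by gcongr; linarith
    _ = 1 - (#S : ℝ) / (2 * s ^ 2 * n ^ 2) := by field_simp; ring

lemma norm_dft_stepDist_pow_le (hG1 : G 1 = 1) {s : ℕ} (hs0 : 0 < s)
    (hs : ∀ i, 1 ≤ i → G (i + 1) ≤ s * G i) (hn : 1 ≤ n) (hm : m = G n) {k : ZMod m}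
    (hk : k ≠ 0) {t : ℕ} (ht : 4 * s ^ 2 * log (2 * s ^ 2) * n ^ 2 ≤ t) :
    ‖𝓕 (fun x ↦ (stepDist G n m x : ℂ)) k‖ ^ t ≤ (8 * (k.valMinAbs.natAbs : ℝ) ^ 2)⁻¹ := by
  obtain ⟨N, hN, hgap⟩ := exists_norm_dft_stepDist_sq_le hG1 hs0 hs hn hm hk
  set x := ‖𝓕 (fun x ↦ (stepDist G n m x : ℂ)) k‖
  set a : ℝ := N / (2 * s ^ 2 * n ^ 2)
  have hsR : (0 : ℝ) < s := by exact_mod_cast hs0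
  have hnR : (1 : ℝ) ≤ n := by exact_mod_cast hn
  have hk' : (1 : ℝ) ≤ k.valMinAbs.natAbs := by
    exact_mod_cast Nat.one_le_iff_ne_zero.2 (by simpa using hk)
  have hN1 : 1 ≤ N := by
    by_contra! h0; rw [Nat.lt_one_iff.1 h0, pow_zero] at hN; linarith
  have hx : x ≤ exp (-(a / 2)) := by
    -- `2 x ≤ x ^ 2 + 1 ≤ 2 - a`
    have hxa : x ≤ 1 - a / 2 := by nlinarith [sq_nonneg (x - 1)]
    linarith [add_one_le_exp (-(a / 2))]
  have hexponent : N * log (2 * s ^ 2) ≤ a / 2 * t := by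
    have : a / 2 * t = N * (t / (4 * s ^ 2 * n ^ 2)) := by simp only [a]; field_simp; ring
    rw [this]
    gcongr
    rw [le_div_iff₀ (by positivity)]; linarith
  calc x ^ t ≤ exp (-(a / 2)) ^ t := pow_le_pow_left₀ (norm_nonneg _) hx t
    _ = exp (-(a / 2 * t)) := by rw [← exp_nat_mul]; ring_nf
    _ ≤ exp (-(N * log (2 * s ^ 2))) := exp_le_exp.2 (neg_le_neg hexponent)
    _ = ((2 * (s : ℝ) ^ 2) ^ N)⁻¹ := by
        rw [exp_neg, exp_nat_mul, exp_log (by positivity)]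
    _ ≤ (8 * (k.valMinAbs.natAbs : ℝ) ^ 2)⁻¹ := by
        gcongr
        calc 8 * (k.valMinAbs.natAbs : ℝ) ^ 2 = 2 * (2 * k.valMinAbs.natAbs) ^ 2 := by ring
          _ ≤ 2 ^ N * ((s : ℝ) ^ N) ^ 2 := by
              gcongr
              · calc (2 : ℝ) = 2 ^ 1 := (pow_one 2).symm
                  _ ≤ 2 ^ N := pow_le_pow_right₀ one_le_two hN1
          _ = (2 * (s : ℝ) ^ 2) ^ N := by ring
end Walk

theorem mixing_time_le_n_sq_general
    (G : ℕ → ℕ) (hG1 : G 1 = 1)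
    (s : ℕ) (hs2 : 2 ≤ s) (hs : ∀ i, 1 ≤ i → G (i + 1) ≤ s * G i) :
    ∃ γ : ℝ, 0 < γ ∧
      ∀ (n : ℕ), 2 ≤ n → ∀ (m : ℕ) [NeZero m], m = G n →
        ∀ t : ℕ, γ * (n : ℝ) ^ 2 ≤ t →
          (1 / 2 : ℝ) * ∑ x : ZMod m, |walkDist G n m t x - 1 / m| ≤ 1 / 4 := by
  have hsR : (2 : ℝ) ≤ s := by exact_mod_cast hs2
  refine ⟨4 * s ^ 2 * log (2 * s ^ 2), by
    have : 0 < log (2 * (s : ℝ) ^ 2) := log_pos (by nlinarith)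
    positivity, ?_⟩
  intro n hn m _ hm t ht
  calc (1 / 2 : ℝ) * ∑ x : ZMod m, |walkDist G n m t x - 1 / m|
      ≤ 1 / 2 * ∑ k ∈ univ.erase 0, ‖𝓕 (fun x ↦ (stepDist G n m x : ℂ)) k‖ ^ t := by
        gcongr; exact sum_abs_walkDist_sub_le (by omega) t
    _ ≤ 1 / 2 * ∑ k ∈ univ.erase (0 : ZMod m), (8 * (k.valMinAbs.natAbs : ℝ) ^ 2)⁻¹ := by
        gcongr with k hk
        exact norm_dft_stepDist_pow_le hG1 (by omega) hs (by omega) hm (ne_of_mem_erase hk) ht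
    _ ≤ 1 / 4 := by
        simp_rw [mul_inv, ← mul_sum]
        linarith [ZMod.sum_inv_sq_natAbs_valMinAbs_le m]

/-- The mixing time of the random walk determined by a linear recurrence is at most
`γ n²` for some constant `γ` depending only on `s`. -/
theorem mixing_time_le_n_sq
    (G : ℕ → ℕ) (hG1 : G 1 = 1) (hmono : ∀ i, 1 ≤ i → G i < G (i + 1))
    (s : ℕ) (hs2 : 2 ≤ s) (hs : ∀ i, 1 ≤ i → G (i + 1) ≤ s * G i) :
    ∃ γ : ℝ, 0 < γ ∧
      ∀ (n : ℕ), 2 ≤ n → ∀ (m : ℕ) [NeZero m], m = G n →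
        ∀ t : ℕ, γ * (n : ℝ) ^ 2 ≤ t →
          (1 / 2 : ℝ) * ∑ x : ZMod m, |walkDist G n m t x - 1 / m| ≤ 1 / 4 :=
  mixing_time_le_n_sq_general G hG1 s hs2 hs
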